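/- For n ≥ 7, c_n = A_n + (1 - B_n) c_{n-1}, where A_n := n/2^{n-1} + (n·c_1 + C(n,2)·c_2 + C(n,3)·c_3)/2^n and B_n := (2 + n + C(n,2) + C(n,3))/2^n. -/

import Mathlib

def c : ℕ → ℚ
  | 0 => 0
  | 1 => 1
  | n + 2 =>
    (n + 2 : ℚ) / 2 ^ (n + 1) +
      (1 / 2 ^ (n + 2)) *
        ∑ j ∈ (Finset.Icc 1 (n + 1)).attach,
          ((n + 2).choose j.1 : ℚ) *
            (Finset.Icc j.1 (n + 1)).attach.inf'
              (Finset.attach_nonempty_iff.mpr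
                (Finset.nonempty_Icc.mpr (Finset.mem_Icc.mp j.2).2))
              (fun m => c m.1)
  decreasing_by
    exact Nat.lt_succ_of_le (Finset.mem_Icc.mp m.2).2


def A (n : ℕ) : ℚ :=
  (n : ℚ) / 2 ^ (n - 1) +
    ((n : ℚ) * c 1 + (n.choose 2 : ℚ) * c 2 + (n.choose 3 : ℚ) * c 3) / 2 ^ n

def B (n : ℕ) : ℚ := (2 + (n : ℚ) + (n.choose 2 : ℚ) + (n.choose 3 : ℚ)) / 2 ^ n

lemma c_one : c 1 = 1 := by rw [c]

lemma c_rw (k : ℕ) (μ : ℕ → ℚ)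
    (hμ : ∀ j, 1 ≤ j → j ≤ k + 1 →
      (∀ i, j ≤ i → i ≤ k + 1 → μ j ≤ c i) ∧ (∃ i, j ≤ i ∧ i ≤ k + 1 ∧ c i = μ j)) :
    c (k + 2) = (k + 2 : ℚ) / 2 ^ (k + 1) +
      (1 / 2 ^ (k + 2)) * ∑ j ∈ Finset.Icc 1 (k + 1), ((k + 2).choose j : ℚ) * μ j := by
  rw [c]
  congr 1
  congr 1
  rw [← Finset.sum_attach (Finset.Icc 1 (k+1)) (fun j => ((k + 2).choose j : ℚ) * μ j)]
  refine Finset.sum_congr rfl ?_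
  rintro ⟨j, hj⟩ -
  obtain ⟨hj1, hj2⟩ := Finset.mem_Icc.mp hj
  obtain ⟨hle, i, hi1, hi2, hie⟩ := hμ j hj1 hj2
  congr 1
  apply le_antisymm
  · exact hie ▸ Finset.inf'_le (fun m => c m.1)
      (Finset.mem_attach _ ⟨i, Finset.mem_Icc.mpr ⟨hi1, hi2⟩⟩)
  · exact Finset.le_inf' _ _ fun b _ => hle b.1 (Finset.mem_Icc.mp b.2).1 (Finset.mem_Icc.mp b.2).2

lemma sum_Icc_one (k : ℕ) (f : ℕ → ℚ) :
    ∑ j ∈ Finset.Icc 1 (k+1), f j = ∑ j ∈ Finset.range (k+1), f (1 + j) := by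
  rw [← Finset.Ico_add_one_right_eq_Icc, Finset.sum_Ico_eq_sum_range]
  norm_num

lemma c_two : c 2 = 3/2 := by
  rw [show (2:ℕ) = 0 + 2 by rfl, c_rw 0 c ?hμ]
  · norm_num [sum_Icc_one, Finset.sum_range_succ, c_one]
  case hμ =>
    intro j h1 h2
    refine ⟨?_, j, le_refl _, h2, rfl⟩
    intro i hi1 hi2
    interval_cases j <;> interval_cases i <;> norm_num

lemma c_three : c 3 = 27/16 := by
  rw [show (3:ℕ) = 1 + 2 by rfl, c_rw 1 c ?hμ]
  · norm_num [sum_Icc_one, Finset.sum_range_succ, c_one, c_two]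
  case hμ =>
    intro j h1 h2
    refine ⟨?_, j, le_refl _, h2, rfl⟩
    intro i hi1 hi2
    interval_cases j <;> interval_cases i <;> norm_num [c_one, c_two]

set_option linter.unnecessarySeqFocus false

lemma c_four : c 4 = 111/64 := by
  rw [show (4:ℕ) = 2 + 2 by rfl, c_rw 2 c ?hμ]
  · norm_num [sum_Icc_one, Finset.sum_range_succ, c_one, c_two, c_three, Nat.choose]
  case hμ =>
    intro j h1 h2
    refine ⟨?_, j, le_refl _, h2, rfl⟩
    intro i hi1 hi2
    interval_cases j <;> interval_cases i <;> norm_num [c_one, c_two, c_three]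

lemma c_five : c 5 = 3555/2048 := by
  rw [show (5:ℕ) = 3 + 2 by rfl, c_rw 3 c ?hμ]
  · norm_num [sum_Icc_one, Finset.sum_range_succ, c_one, c_two, c_three, c_four, Nat.choose]
  case hμ =>
    intro j h1 h2
    refine ⟨?_, j, le_refl _, h2, rfl⟩
    intro i hi1 hi2
    interval_cases j <;> interval_cases i <;> norm_num [c_one, c_two, c_three, c_four]

lemma c_six : c 6 = 113337/65536 := by
  rw [show (6:ℕ) = 4 + 2 by rfl, c_rw 4 c ?hμ]
  · norm_num [sum_Icc_one, Finset.sum_range_succ, c_one, c_two, c_three, c_four, c_five, Nat.choose]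
  case hμ =>
    intro j h1 h2
    refine ⟨?_, j, le_refl _, h2, rfl⟩
    intro i hi1 hi2
    interval_cases j <;> interval_cases i <;> norm_num [c_one, c_two, c_three, c_four, c_five]

lemma c_step (k : ℕ) (hk : 5 ≤ k)
    (H1 : ∀ i, 1 ≤ i → i ≤ k+1 → 1 ≤ c i)
    (H2 : ∀ i, 2 ≤ i → i ≤ k+1 → 3/2 ≤ c i)
    (H3 : ∀ i, 3 ≤ i → i ≤ k+1 → 27/16 ≤ c i)
    (H4 : ∀ i, 4 ≤ i → i ≤ k+1 → c (k+1) ≤ c i) :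
    c (k + 2) = A (k+2) + (1 - B (k+2)) * c (k+1) := by
  have hμ : ∀ j, 1 ≤ j → j ≤ k + 1 →
      (∀ i, j ≤ i → i ≤ k + 1 → (if j ≤ 3 then c j else c (k+1)) ≤ c i) ∧
      (∃ i, j ≤ i ∧ i ≤ k + 1 ∧ c i = (if j ≤ 3 then c j else c (k+1))) := by
    intro j h1 h2
    by_cases hj : j ≤ 3
    · simp only [if_pos hj]
      refine ⟨?_, j, le_refl _, h2, rfl⟩
      intro i hi1 hi2
      interval_cases j
      · rw [c_one]; exact H1 i (by omega) hi2
      · rw [c_two]; exact H2 i (by omega) hi2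
      · rw [c_three]; exact H3 i (by omega) hi2
    · simp only [if_neg hj]
      exact ⟨fun i hi1 hi2 => H4 i (by omega) hi2, k+1, h2, le_refl _, rfl⟩
  rw [c_rw k _ hμ]
  -- split the sum
  have hsplit : ∑ j ∈ Finset.Icc 1 (k+1), ((k + 2).choose j : ℚ) * (if j ≤ 3 then c j else c (k+1))
      = ((k+2 : ℚ) * c 1 + ((k+2).choose 2 : ℚ) * c 2 + ((k+2).choose 3 : ℚ) * c 3)
        + (∑ j ∈ Finset.Ico 4 (k+2), ((k + 2).choose j : ℚ)) * c (k+1) := by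
    rw [← Finset.Ico_add_one_right_eq_Icc, show k + 1 + 1 = k + 2 from rfl, ← Finset.sum_Ico_consecutive _ (by omega : 1 ≤ 4) (by omega : 4 ≤ k+2)]
    congr 1
    · rw [show Finset.Ico 1 4 = {1, 2, 3} from rfl]
      rw [Finset.sum_insert (by decide), Finset.sum_insert (by decide), Finset.sum_singleton]
      push_cast [Nat.choose_one_right]
      ring
    · rw [Finset.sum_mul]
      refine Finset.sum_congr rfl ?_
      intro j hj
      have hj4 := Finset.mem_Ico.mp hj
      rw [if_neg (by omega : ¬ (j ≤ 3))]

  have hT : ∑ j ∈ Finset.Ico 4 (k+2), ((k + 2).choose j : ℚ)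
      = 2^(k+2) - 2 - (k+2 : ℚ) - ((k+2).choose 2 : ℚ) - ((k+2).choose 3 : ℚ) := by
    have h0 : (∑ j ∈ Finset.range (k+3), ((k+2).choose j : ℚ)) = 2^(k+2) := by
      rw [← Nat.cast_sum]
      rw [Nat.sum_range_choose (k+2)]
      push_cast
      ring
    rw [Finset.range_eq_Ico] at h0
    rw [← Finset.sum_Ico_consecutive _ (by omega : 0 ≤ 4) (by omega : 4 ≤ k+3)] at h0
    rw [Finset.sum_Ico_succ_top (by omega : 4 ≤ k+2)] at h0
    have h1 : ∑ j ∈ Finset.Ico 0 4, ((k+2).choose j : ℚ)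
        = 1 + (k+2 : ℚ) + ((k+2).choose 2 : ℚ) + ((k+2).choose 3 : ℚ) := by
      rw [show Finset.Ico 0 4 = {0, 1, 2, 3} from rfl]
      rw [Finset.sum_insert (by decide), Finset.sum_insert (by decide),
        Finset.sum_insert (by decide), Finset.sum_singleton]
      push_cast [Nat.choose_one_right, Nat.choose_zero_right]
      ring
    rw [h1, Nat.choose_self] at h0
    push_cast at h0 ⊢
    linarith
  rw [hsplit, hT, A, B, c_one, c_two, c_three]
  have he : ((k:ℕ)+2) - 1 = k+1 := rfl
  rw [he]
  have hp : (2:ℚ)^(k+2) = 2 * 2^(k+1) := by rw [pow_succ]; ring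
  have hpos : (0:ℚ) < 2^(k+1) := by positivity
  rw [hp]
  push_cast
  field_simp
  ring

lemma c_seven : c 7 = 14451591/8388608 := by
  rw [show (7:ℕ) = 5 + 2 from rfl, c_step 5 (by omega) ?h1 ?h2 ?h3 ?h4]
  · norm_num [A, B, c_one, c_two, c_three, c_six, Nat.choose]
  case h1 => intro i h1 h2; interval_cases i <;> norm_num [c_one, c_two, c_three, c_four, c_five, c_six]
  case h2 => intro i h1 h2; interval_cases i <;> norm_num [c_one, c_two, c_three, c_four, c_five, c_six]
  case h3 => intro i h1 h2; interval_cases i <;> norm_num [c_one, c_two, c_three, c_four, c_five, c_six]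
  case h4 => intro i h1 h2; interval_cases i <;> norm_num [c_one, c_two, c_three, c_four, c_five, c_six]

lemma c_eight : c 8 = 1843764663/1073741824 := by
  rw [show (8:ℕ) = 6 + 2 from rfl, c_step 6 (by omega) ?h1 ?h2 ?h3 ?h4]
  · norm_num [A, B, c_one, c_two, c_three, c_seven, Nat.choose]
  case h1 => intro i h1 h2; interval_cases i <;> norm_num [c_one, c_two, c_three, c_four, c_five, c_six, c_seven]
  case h2 => intro i h1 h2; interval_cases i <;> norm_num [c_one, c_two, c_three, c_four, c_five, c_six, c_seven]
  case h3 => intro i h1 h2; interval_cases i <;> norm_num [c_one, c_two, c_three, c_four, c_five, c_six, c_seven]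
  case h4 => intro i h1 h2; interval_cases i <;> norm_num [c_one, c_two, c_three, c_four, c_five, c_six, c_seven]

lemma c_nine : c 9 = 941650327899/549755813888 := by
  rw [show (9:ℕ) = 7 + 2 from rfl, c_step 7 (by omega) ?h1 ?h2 ?h3 ?h4]
  · norm_num [A, B, c_one, c_two, c_three, c_eight, Nat.choose]
  case h1 => intro i h1 h2; interval_cases i <;> norm_num [c_one, c_two, c_three, c_four, c_five, c_six, c_seven, c_eight]
  case h2 => intro i h1 h2; interval_cases i <;> norm_num [c_one, c_two, c_three, c_four, c_five, c_six, c_seven, c_eight]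
  case h3 => intro i h1 h2; interval_cases i <;> norm_num [c_one, c_two, c_three, c_four, c_five, c_six, c_seven, c_eight]
  case h4 => intro i h1 h2; interval_cases i <;> norm_num [c_one, c_two, c_three, c_four, c_five, c_six, c_seven, c_eight]

lemma c_ten : c 10 = 962504571896853/562949953421312 := by
  rw [show (10:ℕ) = 8 + 2 from rfl, c_step 8 (by omega) ?h1 ?h2 ?h3 ?h4]
  · norm_num [A, B, c_one, c_two, c_three, c_nine, Nat.choose]
  case h1 => intro i h1 h2; interval_cases i <;> norm_num [c_one, c_two, c_three, c_four, c_five, c_six, c_seven, c_eight, c_nine]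
  case h2 => intro i h1 h2; interval_cases i <;> norm_num [c_one, c_two, c_three, c_four, c_five, c_six, c_seven, c_eight, c_nine]
  case h3 => intro i h1 h2; interval_cases i <;> norm_num [c_one, c_two, c_three, c_four, c_five, c_six, c_seven, c_eight, c_nine]
  case h4 => intro i h1 h2; interval_cases i <;> norm_num [c_one, c_two, c_three, c_four, c_five, c_six, c_seven, c_eight, c_nine]

lemma c_eleven : c 11 = 1968712895268696291/1152921504606846976 := by
  rw [show (11:ℕ) = 9 + 2 from rfl, c_step 9 (by omega) ?h1 ?h2 ?h3 ?h4]
  · norm_num [A, B, c_one, c_two, c_three, c_ten, Nat.choose]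
  case h1 => intro i h1 h2; interval_cases i <;> norm_num [c_one, c_two, c_three, c_four, c_five, c_six, c_seven, c_eight, c_nine, c_ten]
  case h2 => intro i h1 h2; interval_cases i <;> norm_num [c_one, c_two, c_three, c_four, c_five, c_six, c_seven, c_eight, c_nine, c_ten]
  case h3 => intro i h1 h2; interval_cases i <;> norm_num [c_one, c_two, c_three, c_four, c_five, c_six, c_seven, c_eight, c_nine, c_ten]
  case h4 => intro i h1 h2; interval_cases i <;> norm_num [c_one, c_two, c_three, c_four, c_five, c_six, c_seven, c_eight, c_nine, c_ten]

lemma c_twelve : c 12 = 2014225165536796850559/1180591620717411303424 := by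
  rw [show (12:ℕ) = 10 + 2 from rfl, c_step 10 (by omega) ?h1 ?h2 ?h3 ?h4]
  · norm_num [A, B, c_one, c_two, c_three, c_eleven, Nat.choose]
  case h1 => intro i h1 h2; interval_cases i <;> norm_num [c_one, c_two, c_three, c_four, c_five, c_six, c_seven, c_eight, c_nine, c_ten, c_eleven]
  case h2 => intro i h1 h2; interval_cases i <;> norm_num [c_one, c_two, c_three, c_four, c_five, c_six, c_seven, c_eight, c_nine, c_ten, c_eleven]
  case h3 => intro i h1 h2; interval_cases i <;> norm_num [c_one, c_two, c_three, c_four, c_five, c_six, c_seven, c_eight, c_nine, c_ten, c_eleven]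
  case h4 => intro i h1 h2; interval_cases i <;> norm_num [c_one, c_two, c_three, c_four, c_five, c_six, c_seven, c_eight, c_nine, c_ten, c_eleven]

lemma c_thirteen : c 13 = 16491096542119650587066619/9671406556917033397649408 := by
  rw [show (13:ℕ) = 11 + 2 from rfl, c_step 11 (by omega) ?h1 ?h2 ?h3 ?h4]
  · norm_num [A, B, c_one, c_two, c_three, c_twelve, Nat.choose]
  case h1 => intro i h1 h2; interval_cases i <;> norm_num [c_one, c_two, c_three, c_four, c_five, c_six, c_seven, c_eight, c_nine, c_ten, c_eleven, c_twelve]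
  case h2 => intro i h1 h2; interval_cases i <;> norm_num [c_one, c_two, c_three, c_four, c_five, c_six, c_seven, c_eight, c_nine, c_ten, c_eleven, c_twelve]
  case h3 => intro i h1 h2; interval_cases i <;> norm_num [c_one, c_two, c_three, c_four, c_five, c_six, c_seven, c_eight, c_nine, c_ten, c_eleven, c_twelve]
  case h4 => intro i h1 h2; interval_cases i <;> norm_num [c_one, c_two, c_three, c_four, c_five, c_six, c_seven, c_eight, c_nine, c_ten, c_eleven, c_twelve]

lemma choose3_succ (n : ℕ) : (n+1).choose 3 = n.choose 3 + n.choose 2 := by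
  rw [show (3:ℕ) = 2+1 from rfl, Nat.choose_succ_succ]
  exact Nat.add_comm _ _

lemma choose2_succ (n : ℕ) : (n+1).choose 2 = n.choose 2 + n := by
  rw [show (2:ℕ) = 1+1 from rfl, Nat.choose_succ_succ, Nat.choose_one_right]
  exact Nat.add_comm _ _

lemma cast_c3 (n : ℕ) : ((n+3).choose 3 : ℚ) = (n+3)*(n+2)*(n+1)/6 := by
  induction n with
  | zero => norm_num [Nat.choose]
  | succ m ih =>
    have h : (m+4).choose 3 = (m+3).choose 3 + (m+3).choose 2 := choose3_succ (m+3)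
    rw [show m+1+3 = m+4 from rfl, h]
    push_cast [ih, Nat.cast_choose_two]
    ring

lemma pow32_ge (m : ℕ) : ((m:ℚ)+14)^2 / 2 ≤ (3/2:ℚ)^(m+13) := by
  induction m with
  | zero => norm_num
  | succ m ih =>
    have h : (3/2:ℚ)^(m+1+13) = (3/2) * (3/2)^(m+13) := by rw [pow_succ]; ring
    rw [h]
    push_cast
    nlinarith [ih, (by positivity : (0:ℚ) ≤ (m:ℚ))]

lemma D_le (m : ℕ) : 20 * (2 + (m+14) + (m+14).choose 2 + (m+14).choose 3) ≤ 2^(m+14) := by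
  induction m with
  | zero => decide
  | succ m ih =>
    rw [show m+1+14 = m+15 from rfl]
    have e2 : (m+15).choose 2 = (m+14).choose 2 + (m+14) := choose2_succ (m+14)
    have e3 : (m+15).choose 3 = (m+14).choose 3 + (m+14).choose 2 := choose3_succ (m+14)
    have hp : 2^(m+15) = 2 * 2^(m+14) := by rw [show m+15 = (m+14)+1 from rfl, pow_succ]; omega
    have hc2 : 1 ≤ (m+14).choose 2 := Nat.choose_pos (by omega)
    rw [hp]
    omega

lemma B_nonneg (n : ℕ) : 0 ≤ B n := by
  rw [B]; positivity

lemma castC2 (m : ℕ) : ((m+14).choose 2 : ℚ) = ((m:ℚ)+14)*((m:ℚ)+13)/2 := by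
  rw [Nat.cast_choose_two]; push_cast; ring

lemma castC3 (m : ℕ) : ((m+14).choose 3 : ℚ) = ((m:ℚ)+14)*((m:ℚ)+13)*((m:ℚ)+12)/6 := by
  have h := cast_c3 (m+11)
  rw [show m+11+3 = m+14 from rfl] at h
  rw [h]; push_cast; ring

lemma B_le (m : ℕ) : B (m+14) ≤ 1/20 := by
  have h := D_le m
  have hcast : (20:ℚ) * (2 + ((m:ℚ)+14) + ((m+14).choose 2 : ℚ) + ((m+14).choose 3 : ℚ)) ≤ 2^(m+14) := by
    have := (Nat.cast_le (α := ℚ)).mpr h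
    push_cast at this
    linarith
  rw [B, div_le_iff₀ (by positivity)]
  push_cast
  linarith

lemma hA_eq (m : ℕ) : A (m+14) = (3*((m:ℚ)+14) + (3/2)*(((m:ℚ)+14)*((m:ℚ)+13)/2)
    + (27/16)*(((m:ℚ)+14)*((m:ℚ)+13)*((m:ℚ)+12)/6)) / (2*(2:ℚ)^(m+13)) := by
  rw [A, c_one, c_two, c_three, castC2, castC3, show m+14-1 = m+13 from rfl,
    show (2:ℚ)^(m+14) = 2*2^(m+13) by rw [pow_succ]; ring]
  have hP : (0:ℚ) < 2^(m+13) := by positivity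
  push_cast
  field_simp
  ring

lemma hB_eq (m : ℕ) : B (m+14) = (2+((m:ℚ)+14)+((m:ℚ)+14)*((m:ℚ)+13)/2
    + ((m:ℚ)+14)*((m:ℚ)+13)*((m:ℚ)+12)/6) / (2*(2:ℚ)^(m+13)) := by
  rw [B, castC2, castC3, show (2:ℚ)^(m+14) = 2*2^(m+13) by rw [pow_succ]; ring]
  push_cast
  ring

lemma AB_I1 (m : ℕ) : A (m+14) ≤ (27/16) * B (m+14) := by
  have hm : (0:ℚ) ≤ (m:ℚ) := Nat.cast_nonneg m
  have hP : (0:ℚ) < 2^(m+13) := by positivity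
  have h2P : (0:ℚ) < 2*(2:ℚ)^(m+13) := by positivity
  rw [hA_eq, hB_eq]
  set P := (2:ℚ)^(m+13) with hPdef
  set x := (m:ℚ) with hxdef
  have key : (3*(x+14) + (3/2)*((x+14)*(x+13)/2) + (27/16)*((x+14)*(x+13)*(x+12)/6)) / (2*P) * (2*P)
      ≤ 27/16 * ((2+(x+14)+(x+14)*(x+13)/2 + (x+14)*(x+13)*(x+12)/6) / (2*P)) * (2*P) := by
    have e1 : (3*(x+14) + (3/2)*((x+14)*(x+13)/2) + (27/16)*((x+14)*(x+13)*(x+12)/6)) / (2*P) * (2*P)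
        = 3*(x+14) + (3/2)*((x+14)*(x+13)/2) + (27/16)*((x+14)*(x+13)*(x+12)/6) := by
      field_simp
    have e2 : 27/16 * ((2+(x+14)+(x+14)*(x+13)/2 + (x+14)*(x+13)*(x+12)/6) / (2*P)) * (2*P)
        = 27/16 * (2+(x+14)+(x+14)*(x+13)/2 + (x+14)*(x+13)*(x+12)/6) := by
      field_simp
    rw [e1, e2]
    nlinarith [hm, mul_nonneg hm hm]
  exact le_of_mul_le_mul_right key h2P

lemma AB_I2 (m : ℕ) :
    27/16 + (7/10)*(3/4:ℚ)^(m+14) ≤ A (m+14) + (1 - B (m+14)) * (27/16 + (7/10)*(3/4:ℚ)^(m+13)) := by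
  have hm : (0:ℚ) ≤ (m:ℚ) := Nat.cast_nonneg m
  have hP : (0:ℚ) < 2^(m+13) := by positivity
  have hQ0 : (0:ℚ) ≤ (3/4:ℚ)^(m+13) := by positivity
  have hD : (20:ℚ) * (2 + ((m:ℚ)+14) + ((m:ℚ)+14)*((m:ℚ)+13)/2 + ((m:ℚ)+14)*((m:ℚ)+13)*((m:ℚ)+12)/6) ≤ 2*2^(m+13) := by
    have h := (Nat.cast_le (α := ℚ)).mpr (D_le m)
    push_cast at h
    rw [show (2:ℚ)^(m+14) = 2*2^(m+13) by rw [pow_succ]; ring] at h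
    rw [castC2, castC3] at h
    push_cast at h
    linarith
  have hQP : ((m:ℚ)+14)^2/2 ≤ (3/4:ℚ)^(m+13) * 2^(m+13) := by
    have h := pow32_ge m
    have he : (3/4:ℚ)^(m+13) * 2^(m+13) = (3/2:ℚ)^(m+13) := by
      rw [← mul_pow]; norm_num
    rw [he]; exact h
  rw [hA_eq, hB_eq, show (3/4:ℚ)^(m+14) = (3/4)*(3/4)^(m+13) by rw [pow_succ]; ring]
  set P := (2:ℚ)^(m+13) with hPdef
  set Q := (3/4:ℚ)^(m+13) with hQdef
  set x := (m:ℚ) with hxdef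
  have hDQ := mul_le_mul_of_nonneg_right hD hQ0
  have h2P : (0:ℚ) < 2*P := by positivity
  have key : (27/16 + 7/10 * (3/4 * Q)) * (2*P) ≤
      ((3*(x+14) + (3/2)*((x+14)*(x+13)/2) + (27/16)*((x+14)*(x+13)*(x+12)/6)) / (2*P)
      + (1 - (2+(x+14)+(x+14)*(x+13)/2 + (x+14)*(x+13)*(x+12)/6) / (2*P))
        * (27/16 + 7/10 * Q)) * (2*P) := by
    have e1 : ((3*(x+14) + (3/2)*((x+14)*(x+13)/2) + (27/16)*((x+14)*(x+13)*(x+12)/6)) / (2*P)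
      + (1 - (2+(x+14)+(x+14)*(x+13)/2 + (x+14)*(x+13)*(x+12)/6) / (2*P))
        * (27/16 + 7/10 * Q)) * (2*P)
        = (3*(x+14) + (3/2)*((x+14)*(x+13)/2) + (27/16)*((x+14)*(x+13)*(x+12)/6))
          + (2*P - (2+(x+14)+(x+14)*(x+13)/2 + (x+14)*(x+13)*(x+12)/6)) * (27/16 + 7/10 * Q) := by
      field_simp
    rw [e1]
    nlinarith [hDQ, hQP, hQ0, hP.le, hm, mul_nonneg hm hm]
  exact le_of_mul_le_mul_right key h2P

lemma grand (N : ℕ) : (3 ≤ N → 27/16 ≤ c N) ∧ (6 ≤ N → ∀ i, 4 ≤ i → i ≤ N → c N ≤ c i) ∧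
    (13 ≤ N → 27/16 + (7/10)*(3/4:ℚ)^N ≤ c N) := by
  induction N using Nat.strong_induction_on with
  | _ N IH =>
  by_cases hN : N ≤ 13
  · refine ⟨?_, ?_, ?_⟩
    · intro h3
      interval_cases N <;>
        norm_num [c_three, c_four, c_five, c_six, c_seven, c_eight, c_nine, c_ten,
          c_eleven, c_twelve, c_thirteen]
    · intro h6 i hi1 hi2
      interval_cases N <;> interval_cases i <;>
        norm_num [c_four, c_five, c_six, c_seven, c_eight, c_nine, c_ten,
          c_eleven, c_twelve, c_thirteen]
    · intro h13
      have hN13 : N = 13 := by omega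
      subst hN13
      rw [c_thirteen]
      norm_num
  · push_neg at hN
    obtain ⟨m, rfl⟩ : ∃ m, N = m + 14 := ⟨N - 14, by omega⟩
    have hlow : ∀ i, 3 ≤ i → i ≤ m+13 → 27/16 ≤ c i := fun i h1 h2 =>
      (IH i (by omega)).1 h1
    have hrec : c (m+14) = A (m+14) + (1 - B (m+14)) * c (m+13) := by
      rw [show m+14 = (m+12)+2 from rfl]
      refine c_step (m+12) (by omega) ?_ ?_ ?_ ?_
      · intro i h1 h2
        rcases Nat.lt_or_ge i 3 with h | h
        · interval_cases i <;> norm_num [c_one, c_two]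
        · linarith [hlow i h h2]
      · intro i h1 h2
        rcases Nat.lt_or_ge i 3 with h | h
        · interval_cases i <;> norm_num [c_two]
        · linarith [hlow i h h2]
      · exact hlow
      · exact fun i h1 h2 => (IH (m+13) (by omega)).2.1 (by omega) i h1 h2
    have hdecay13 : 27/16 + (7/10)*(3/4:ℚ)^(m+13) ≤ c (m+13) :=
      (IH (m+13) (by omega)).2.2 (by omega)
    have h1B : 0 ≤ 1 - B (m+14) := by linarith [B_le m]
    have hdecay : 27/16 + (7/10)*(3/4:ℚ)^(m+14) ≤ c (m+14) := by
      calc 27/16 + (7/10)*(3/4:ℚ)^(m+14)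
          ≤ A (m+14) + (1 - B (m+14)) * (27/16 + (7/10)*(3/4:ℚ)^(m+13)) := AB_I2 m
        _ ≤ A (m+14) + (1 - B (m+14)) * c (m+13) := by
            have := mul_le_mul_of_nonneg_left hdecay13 h1B
            linarith
        _ = c (m+14) := hrec.symm
    have h2716 : 27/16 ≤ c (m+14) := by
      have : (0:ℚ) ≤ (7/10)*(3/4:ℚ)^(m+14) := by positivity
      linarith
    have hmono : c (m+14) ≤ c (m+13) := by
      rw [hrec]
      have h27 : 27/16 ≤ c (m+13) := hlow (m+13) (by omega) (le_refl _)
      have hB0 := B_nonneg (m+14)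
      have := AB_I1 m
      nlinarith
    refine ⟨fun _ => h2716, ?_, fun _ => hdecay⟩
    intro h6 i hi1 hi2
    rcases Nat.lt_or_ge i (m+14) with h | h
    · exact le_trans hmono ((IH (m+13) (by omega)).2.1 (by omega) i hi1 (by omega))
    · have : i = m+14 := by omega
      subst this
      exact le_refl _

theorem c_linear_rec (n : ℕ) (hn : 7 ≤ n) :
    c n = A n + (1 - B n) * c (n - 1) := by
  obtain ⟨k, rfl⟩ : ∃ k, n = k + 2 := ⟨n - 2, by omega⟩
  have hk : 5 ≤ k := by omega
  rw [show k + 2 - 1 = k + 1 from rfl]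
  have hlow : ∀ i, 3 ≤ i → i ≤ k+1 → 27/16 ≤ c i := fun i h1 _ => (grand i).1 h1
  refine c_step k hk ?_ ?_ ?_ ?_
  · intro i h1 h2
    rcases Nat.lt_or_ge i 3 with h | h
    · interval_cases i <;> norm_num [c_one, c_two]
    · linarith [hlow i h h2]
  · intro i h1 h2
    rcases Nat.lt_or_ge i 3 with h | h
    · interval_cases i <;> norm_num [c_two]
    · linarith [hlow i h h2]
  · exact hlow
  · exact fun i h1 h2 => (grand (k+1)).2.1 (by omega) i h1 h2
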